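/- arXiv:2205.14368 — 5 statements merged into one kernel-verified Lean document; each statement's English description precedes it below -/
import Mathlib

section
/- For every natural number n ≥ 3, the complete graph K_n contains ⌊(n−1)/2⌋ pairwise edge-disjoint Hamiltonian cycles. -/
namespace EDHC

open SimpleGraph Walk

variable {V : Type*} [DecidableEq V]

/-- The path `f k, f (k-1), ..., f 0` in the complete graph. -/
def desc (f : ℕ → V) : (k : ℕ) → (∀ j, j < k → f (j+1) ≠ f j) → (⊤ : SimpleGraph V).Walk (f k) (f 0)
  | 0, _ => Walk.nil
  | (k+1), h => Walk.cons (by simpa using h k (Nat.lt_succ_self k))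
      (desc f k (fun j hj => h j (hj.trans (Nat.lt_succ_self k))))

lemma desc_support (f : ℕ → V) (k : ℕ) (h : ∀ j, j < k → f (j+1) ≠ f j) :
    (desc f k h).support = ((List.range (k+1)).reverse).map f := by
  induction k with
  | zero => rw [show List.range 1 = [0] from rfl]; simp [desc]
  | succ k ih => simp [desc, ih, List.range_succ]

lemma desc_edges (f : ℕ → V) (k : ℕ) (h : ∀ j, j < k → f (j+1) ≠ f j) :
    (desc f k h).edges = ((List.range k).reverse).map (fun j => s(f (j+1), f j)) := by
  induction k with
  | zero => simp [desc]
  | succ k ih => simp [desc, ih, List.range_succ]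

variable (f : ℕ → V) (m : ℕ) (hm : 2 ≤ m)
  (hinj : ∀ j k, j ≤ m → k ≤ m → f j = f k → j = k)

/-- The cycle `f 0, f m, f (m-1), ..., f 1, f 0` in the complete graph. -/
def cyc : (⊤ : SimpleGraph V).Walk (f 0) (f 0) :=
  Walk.cons (by simp; intro hf; exact absurd (hinj 0 m (Nat.zero_le m) le_rfl hf) (by omega))
    (desc f m (fun j hj h => by have := hinj (j+1) j (by omega) (by omega) h; omega))

lemma cyc_edges : (cyc f m hm hinj).edges
    = s(f 0, f m) :: ((List.range m).reverse).map (fun j => s(f (j+1), f j)) := by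
  simp [cyc, desc_edges]

lemma mem_cyc_edges {e : Sym2 V} (he : e ∈ (cyc f m hm hinj).edges) :
    e = s(f 0, f m) ∨ e = s(f 1, f 0) ∨ ∃ j, 1 ≤ j ∧ j < m ∧ e = s(f (j+1), f j) := by
  rw [cyc_edges] at he
  rcases List.mem_cons.mp he with h | h
  · exact Or.inl h
  · simp only [List.mem_map, List.mem_reverse, List.mem_range] at h
    obtain ⟨j, hj, hej⟩ := h
    rcases Nat.eq_zero_or_pos j with h0 | h1
    · subst h0; exact Or.inr (Or.inl hej.symm)
    · exact Or.inr (Or.inr ⟨j, h1, hj, hej.symm⟩)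

lemma cyc_isHamiltonianCycle (hsurj : ∀ v : V, ∃ j, j ≤ m ∧ f j = v) :
    (cyc f m hm hinj).IsHamiltonianCycle := by
  have hsup : ((List.range (m+1)).reverse.map f).Nodup := by
    refine List.Nodup.map_on ?_ (by simp [List.nodup_range])
    intro x hx y hy hxy
    simp [List.mem_range] at hx hy
    exact hinj x y (by omega) (by omega) hxy
  rw [Walk.isHamiltonianCycle_iff_isCycle_and_support_count_tail_eq_one]
  constructor
  · rw [cyc, Walk.cons_isCycle_iff]
    constructor
    · rw [Walk.isPath_def, desc_support]; exact hsup
    · rw [desc_edges]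
      simp only [List.mem_map, List.mem_reverse, List.mem_range]
      rintro ⟨j, hj, hej⟩
      rw [Sym2.eq_iff] at hej
      rcases hej with ⟨h1, h2⟩ | ⟨h1, h2⟩
      · have := hinj (j+1) 0 (by omega) (by omega) h1; omega
      · have := hinj (j+1) m (by omega) (by omega) h1
        have := hinj j 0 (by omega) (by omega) h2
        omega
  · intro a
    have : (cyc f m hm hinj).support = f 0 :: (List.range (m+1)).reverse.map f := by
      simp [cyc, desc_support]
    rw [this, List.tail_cons]
    have ha : a ∈ (List.range (m+1)).reverse.map f := by
      obtain ⟨j, hj, hfj⟩ := hsurj a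
      simp only [List.mem_map, List.mem_reverse, List.mem_range]
      exact ⟨j, by omega, hfj⟩
    exact List.count_eq_one_of_mem hsup ha


/-- Walecki zig-zag offsets: `0, 1, N-1, 2, N-2, ...` (as residues mod `N`). -/
def oo (N j : ℕ) : ℕ := if j % 2 = 0 then (N - j / 2) % N else (j + 1) / 2

lemma oo_val {N : ℕ} (hN : 1 ≤ N) {j : ℕ} (hj : j < N) :
    (j = 0 ∧ oo N j = 0) ∨ (j % 2 = 0 ∧ 2 ≤ j ∧ oo N j = N - j / 2) ∨
      (j % 2 = 1 ∧ oo N j = (j + 1) / 2) := by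
  unfold oo
  by_cases h2 : j % 2 = 0
  · by_cases h0 : j = 0
    · subst h0; simp
    · refine Or.inr (Or.inl ⟨h2, by omega, ?_⟩)
      rw [if_pos h2, Nat.mod_eq_of_lt (by omega)]
  · exact Or.inr (Or.inr ⟨by omega, by rw [if_neg h2]⟩)

lemma oo_zero (N : ℕ) : oo N 0 = 0 := by simp [oo]

lemma oo_lt {N : ℕ} (hN : 1 ≤ N) {j : ℕ} (hj : j < N) : oo N j < N := by
  rcases oo_val hN hj with ⟨_, h⟩ | ⟨_, _, h⟩ | ⟨_, h⟩ <;> omega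

lemma oo_inj {N : ℕ} (hN : 1 ≤ N) {j k : ℕ} (hj : j < N) (hk : k < N)
    (h : oo N j = oo N k) : j = k := by
  rcases oo_val hN hj with ⟨h1, h2⟩ | ⟨h1, h1', h2⟩ | ⟨h1, h2⟩ <;>
    rcases oo_val hN hk with ⟨g1, g2⟩ | ⟨g1, g1', g2⟩ | ⟨g1, g2⟩ <;> omega

lemma oo_sum {N : ℕ} (hN : 2 ≤ N) {j : ℕ} (h1 : 1 ≤ j) (hj : j < N) :
    (oo N (j - 1) + oo N j) % N = j % 2 := by
  have hj1 : j - 1 < N := by omega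
  have key : oo N (j - 1) + oo N j = N + j % 2 ∨ oo N (j - 1) + oo N j = j % 2 := by
    rcases oo_val (by omega : (1:ℕ) ≤ N) hj1 with ⟨h1', h2⟩ | ⟨h1', h1'', h2⟩ | ⟨h1', h2⟩ <;>
      rcases oo_val (by omega : (1:ℕ) ≤ N) hj with ⟨g1, g2⟩ | ⟨g1, g1', g2⟩ | ⟨g1, g2⟩ <;> omega
  rcases key with h | h
  · rw [h, Nat.add_mod_left, Nat.mod_eq_of_lt (by omega)]
  · rw [h, Nat.mod_eq_of_lt (by omega)]

/-- Bounds for the last offset `oo N (N-1)`. -/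
lemma oo_last {N : ℕ} (hN : 2 ≤ N) :
    N / 2 ≤ oo N (N - 1) ∧ ∀ t, t < N / 2 → t + oo N (N - 1) < N := by
  rcases oo_val (by omega : (1:ℕ) ≤ N) (show N - 1 < N by omega) with
    ⟨h1, h2⟩ | ⟨h1, h1', h2⟩ | ⟨h1, h2⟩ <;> constructor <;> first | omega | (intro t ht; omega)

/-- Vertex sequence of the `i`-th Walecki cycle: `∞ = N`, then `i + oo N j` mod `N`. -/
def fv (n N : ℕ) (hNn : N < n) (hmod : ∀ x : ℕ, x % N < n) (i : ℕ) : ℕ → Fin n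
  | 0 => ⟨N, hNn⟩
  | (j + 1) => ⟨(i + oo N j) % N, hmod _⟩



end EDHC

open EDHC

/-- For every `n ≥ 3`, the complete graph `K_n` contains `⌊(n-1)/2⌋` pairwise
edge-disjoint Hamiltonian cycles. -/
theorem exists_edge_disjoint_hamiltonian_cycles (n : ℕ) (hn : 3 ≤ n) :
    ∃ (v : Fin ((n - 1) / 2) → Fin n)
      (w : (i : Fin ((n - 1) / 2)) → (⊤ : SimpleGraph (Fin n)).Walk (v i) (v i)),
      (∀ i, (w i).IsHamiltonianCycle) ∧
      (∀ i j, i ≠ j → ∀ e, e ∈ (w i).edges → e ∉ (w j).edges) := by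
  set N := n - 1 with hNdef
  have hN : 2 ≤ N := by omega
  have hNn : N < n := by omega
  have hmod : ∀ x : ℕ, x % N < n := fun x => lt_trans (Nat.mod_lt _ (by omega)) hNn
  set f : ℕ → ℕ → Fin n := fv n N hNn hmod with hf
  -- value lemmas
  have hv0 : ∀ a, (f a 0 : ℕ) = N := fun a => rfl
  have hvS : ∀ a j, (f a (j + 1) : ℕ) = (a + oo N j) % N := fun a j => rfl
  have hvltS : ∀ a j, (f a (j + 1) : ℕ) < N := fun a j => Nat.mod_lt _ (by omega)
  -- injectivity
  have hinj : ∀ a : ℕ, ∀ j k, j ≤ N → k ≤ N → f a j = f a k → j = k := by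
    intro a j k hj hk hjk
    have hval := congrArg Fin.val hjk
    match j, k with
    | 0, 0 => rfl
    | 0, (k+1) => rw [hv0, hvS] at hval; have := Nat.mod_lt (a + oo N k) (show 0 < N by omega); omega
    | (j+1), 0 => rw [hv0, hvS] at hval; have := Nat.mod_lt (a + oo N j) (show 0 < N by omega); omega
    | (j+1), (k+1) =>
      rw [hvS, hvS] at hval
      have hcan : oo N j ≡ oo N k [MOD N] := Nat.ModEq.add_left_cancel' a hval
      have : oo N j = oo N k := by
        rw [Nat.ModEq, Nat.mod_eq_of_lt (oo_lt (by omega) (by omega)),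
          Nat.mod_eq_of_lt (oo_lt (by omega) (by omega))] at hcan
        exact hcan
      have := oo_inj (show (1:ℕ) ≤ N by omega) (show j < N by omega) (show k < N by omega) this
      omega
  -- surjectivity
  have hsurj : ∀ a : ℕ, ∀ v : Fin n, ∃ j, j ≤ N ∧ f a j = v := by
    intro a v
    have hg : Function.Injective (fun k : Fin n => f a k.val) := by
      intro x y hxy
      exact Fin.ext (hinj a x.val y.val (by omega) (by omega) hxy)
    obtain ⟨k, hk⟩ := (Finite.injective_iff_bijective.mp hg).surjective v
    exact ⟨k.val, by omega, hk⟩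
  refine ⟨fun i => f i.val 0, fun i => cyc (f i.val) N hN (hinj i.val), ?_, ?_⟩
  · intro i
    exact cyc_isHamiltonianCycle (f i.val) N hN (hinj i.val) (hsurj i.val)
  · -- edge disjointness
    intro i j hij e hei hej
    set a := i.val with ha
    set b := j.val with hb
    have hab : a ≠ b := fun h => hij (Fin.ext h)
    have haN : a < N / 2 := i.isLt
    have hbN : b < N / 2 := j.isLt
    set c := oo N (N - 1) with hc
    obtain ⟨hc1, hc2⟩ : N / 2 ≤ c ∧ ∀ t, t < N / 2 → t + c < N := oo_last hN
    have hac : a + c < N := hc2 a haN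
    have hbc : b + c < N := hc2 b hbN
    -- values of first and last vertices
    have hv1 : ∀ t, t < N / 2 → (f t 1 : ℕ) = t := by
      intro t ht
      rw [hvS, oo_zero, Nat.add_zero]
      exact Nat.mod_eq_of_lt (by omega)
    have hvN : ∀ t, t < N / 2 → (f t N : ℕ) = t + c := by
      intro t ht
      have h3 := hc2 t ht
      have hN1 : N = (N - 1) + 1 := by omega
      conv_lhs => rw [hN1]
      rw [hvS]
      exact Nat.mod_eq_of_lt (by omega)
    -- sum invariant for internal edges
    have hsum : ∀ t u, t < N / 2 → 1 ≤ u → u < N →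
        ((f t (u + 1) : ℕ) + (f t u : ℕ)) % N = 2 * t + u % 2 := by
      intro t u ht hu1 huN
      have hu : u = (u - 1) + 1 := by omega
      have h2 : (f t u : ℕ) = (t + oo N (u - 1)) % N := by
        conv_lhs => rw [hu]
        exact hvS t (u - 1)
      rw [hvS, h2, ← Nat.add_mod]
      have harith : (t + oo N u) + (t + oo N (u - 1)) = 2 * t + (oo N (u - 1) + oo N u) := by ring
      have hmo : (2 * t + (oo N (u - 1) + oo N u)) % N = (2 * t + u % 2) % N := by
        have : (oo N (u - 1) + oo N u) ≡ u % 2 [MOD N] := by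
          rw [Nat.ModEq, oo_sum hN hu1 huN]
          exact (Nat.mod_eq_of_lt (by omega)).symm
        exact Nat.ModEq.add_left _ this
      rw [harith, hmo]
      exact Nat.mod_eq_of_lt (by omega)
    have key : ∀ t u t' u', t < N / 2 → t' < N / 2 → 1 ≤ u → u < N → 1 ≤ u' → u' < N →
        ((f t (u + 1) : ℕ) + (f t u : ℕ) = (f t' (u' + 1) : ℕ) + (f t' u' : ℕ)) → t = t' := by
      intro t u t' u' ht ht' hu1 huN hu1' huN' h
      have h1 := hsum t u ht hu1 huN
      have h2 := hsum t' u' ht' hu1' huN'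
      rw [h] at h1
      rw [h2] at h1
      omega
    have hvlt' : ∀ t u, 1 ≤ u → (f t u : ℕ) < N := by
      intro t u h
      have := hvltS t (u - 1)
      rwa [show u - 1 + 1 = u by omega] at this
    have hva0 : (f a 0 : ℕ) = N := hv0 a
    have hvb0 : (f b 0 : ℕ) = N := hv0 b
    have hva1 : (f a 1 : ℕ) = a := hv1 a haN
    have hvb1 : (f b 1 : ℕ) = b := hv1 b hbN
    have hvaN : (f a N : ℕ) = a + c := hvN a haN
    have hvbN : (f b N : ℕ) = b + c := hvN b hbN
    rcases mem_cyc_edges (f a) N hN (hinj a) hei with hEa | hEa | ⟨u, hu1, huN, hEa⟩ <;>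
      rcases mem_cyc_edges (f b) N hN (hinj b) hej with hEb | hEb | ⟨u', hu1', huN', hEb⟩ <;>
      rw [hEa] at hEb
    · rcases Sym2.eq_iff.mp hEb with ⟨e1, e2⟩ | ⟨e1, e2⟩ <;>
        [(have v2 := congrArg Fin.val e2; rw [hvaN, hvbN] at v2; omega);
         (have v1 := congrArg Fin.val e1; rw [hva0, hvbN] at v1; omega)]
    · rcases Sym2.eq_iff.mp hEb with ⟨e1, e2⟩ | ⟨e1, e2⟩ <;>
        [(have v1 := congrArg Fin.val e1; rw [hva0, hvb1] at v1; omega);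
         (have v1 := congrArg Fin.val e1; rw [hva0, hvb0] at v1;
          have v2 := congrArg Fin.val e2; rw [hvaN, hvb1] at v2; omega)]
    · rcases Sym2.eq_iff.mp hEb with ⟨e1, e2⟩ | ⟨e1, e2⟩ <;>
        [(have v1 := congrArg Fin.val e1; rw [hva0] at v1;
          have := hvltS b u'; omega);
         (have v1 := congrArg Fin.val e1; rw [hva0] at v1;
          have := hvlt' b u' hu1'; omega)]
    · rcases Sym2.eq_iff.mp hEb with ⟨e1, e2⟩ | ⟨e1, e2⟩ <;>
        [(have v1 := congrArg Fin.val e1; rw [hva1, hvb0] at v1; omega);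
         (have v1 := congrArg Fin.val e1; rw [hva1, hvbN] at v1; omega)]
    · rcases Sym2.eq_iff.mp hEb with ⟨e1, e2⟩ | ⟨e1, e2⟩ <;>
        [(have v1 := congrArg Fin.val e1; rw [hva1, hvb1] at v1; omega);
         (have v1 := congrArg Fin.val e1; rw [hva1, hvb0] at v1; omega)]
    · rcases Sym2.eq_iff.mp hEb with ⟨e1, e2⟩ | ⟨e1, e2⟩ <;>
        [(have v2 := congrArg Fin.val e2; rw [hva0] at v2;
          have := hvlt' b u' hu1'; omega);
         (have v2 := congrArg Fin.val e2; rw [hva0] at v2;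
          have := hvltS b u'; omega)]
    · rcases Sym2.eq_iff.mp hEb with ⟨e1, e2⟩ | ⟨e1, e2⟩ <;>
        [(have v1 := congrArg Fin.val e1; rw [hvb0] at v1;
          have := hvltS a u; omega);
         (have v2 := congrArg Fin.val e2; rw [hvb0] at v2;
          have := hvlt' a u hu1; omega)]
    · rcases Sym2.eq_iff.mp hEb with ⟨e1, e2⟩ | ⟨e1, e2⟩ <;>
        [(have v2 := congrArg Fin.val e2; rw [hvb0] at v2;
          have := hvlt' a u hu1; omega);
         (have v1 := congrArg Fin.val e1; rw [hvb0] at v1;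
          have := hvltS a u; omega)]
    · rcases Sym2.eq_iff.mp hEb with ⟨e1, e2⟩ | ⟨e1, e2⟩
      · have v1 := congrArg Fin.val e1
        have v2 := congrArg Fin.val e2
        exact hab (key a u b u' haN hbN hu1 huN hu1' huN' (by omega))
      · have v1 := congrArg Fin.val e1
        have v2 := congrArg Fin.val e2
        exact hab (key a u b u' haN hbN hu1 huN hu1' huN' (by omega))
end

section
/- For every odd natural number n ≥ 3, the edge set of the complete graph K_n can be partitioned into exactly (n−1)/2 pairwise edge-disjoint Hamiltonian cycles; that is, there exist (n−1)/2 Hamiltonian cycles in K_n whose edge sets are pairwise disjoint and whose union is the entire edge set of K_n. -/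
/-!
Walecki's construction. Take `ZMod (2 * k)` together with a point `∞` (`none`) as the vertices
of `K_{2k+1}`. The zigzag `0, 1, -1, 2, -2, …, k` runs through `ZMod (2 * k)`, and closing it up
through `∞` gives a Hamiltonian cycle whose edges have endpoint sums alternately `0` and `1`
(an edge `∞x` counts as `2x`). Its translates by `i = 0, …, k - 1` are Hamiltonian cycles whose
edges have sum `2i` or `2i + 1`, hence pairwise edge-disjoint; being `k (2k + 1)` edges in
total, they use every edge of `K_{2k+1}`.
-/

open Finset SimpleGraph

namespace SimpleGraph

variable {V W ι : Type*} {G : SimpleGraph V} {G' : SimpleGraph W}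

def HasHamiltonianDecomposition [DecidableEq V] (G : SimpleGraph V) (ι : Type*) : Prop :=
  ∃ (v : ι → V) (w : (i : ι) → G.Walk (v i) (v i)),
    (∀ i, (w i).IsHamiltonianCycle) ∧
    (∀ i j, i ≠ j → ∀ e, e ∈ (w i).edges → e ∉ (w j).edges) ∧
    (∀ e, e ∈ G.edgeSet ↔ ∃ i, e ∈ (w i).edges)

theorem HasHamiltonianDecomposition.map [DecidableEq V] [DecidableEq W] (f : G ≃g G')
    (hG : G.HasHamiltonianDecomposition ι) : G'.HasHamiltonianDecomposition ι := by
  obtain ⟨v, w, hham, hdisj, hcover⟩ := hG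
  have hinj : Function.Injective (Sym2.map f) := Sym2.map.injective f.injective
  refine ⟨fun i => f (v i), fun i => (w i).map f.toHom, fun i => (hham i).map f.bijective,
    fun i j hij e hei hej => ?_, fun e => ?_⟩
  · simp only [Walk.edges_map, List.mem_map] at hei hej
    obtain ⟨e₁, he₁, rfl⟩ := hei
    obtain ⟨e₂, he₂, he⟩ := hej
    exact hdisj i j hij e₁ he₁ (hinj he ▸ he₂)
  · obtain ⟨e, rfl⟩ : ∃ e₀, Sym2.map f e₀ = e :=
      ⟨Sym2.map f.symm e, by simp [Sym2.map_map]⟩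
    simp [Walk.edges_map, Iso.map_mem_edgeSet_iff, hinj.eq_iff, hcover]

theorem Walk.exists_mem_edges_of_sum_length_eq [Fintype ι] [Fintype G.edgeSet] {u v : ι → V}
    {w : (i : ι) → G.Walk (u i) (v i)} (htrail : ∀ i, (w i).IsTrail)
    (hdisj : ∀ i j, i ≠ j → ∀ e, e ∈ (w i).edges → e ∉ (w j).edges)
    (hlen : ∑ i, (w i).length = #G.edgeFinset) {e : Sym2 V} (he : e ∈ G.edgeSet) :
    ∃ i, e ∈ (w i).edges := by
  classical
  let S := univ.biUnion fun i => (w i).edges.toFinset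
  have hS : S ⊆ G.edgeFinset := by
    intro e he
    obtain ⟨i, -, hi⟩ := mem_biUnion.1 he
    exact mem_edgeFinset.2 ((w i).edges_subset_edgeSet (List.mem_toFinset.1 hi))
  have hcard : #S = #G.edgeFinset := by
    rw [card_biUnion fun i _ j _ hij => List.disjoint_toFinset_iff_disjoint.2
      fun e hei hej => hdisj i j hij e hei hej, ← hlen]
    simp [List.toFinset_card_of_nodup (htrail _).edges_nodup]
  have heS : e ∈ S := (eq_of_subset_of_card_le hS hcard.ge).symm ▸ mem_edgeFinset.2 he
  obtain ⟨i, -, hi⟩ := mem_biUnion.1 heS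
  exact ⟨i, List.mem_toFinset.1 hi⟩

theorem hasHamiltonianDecomposition_of_pairwise_disjoint [Fintype V] [DecidableEq V] [Fintype ι]
    [Fintype G.edgeSet] {v : ι → V} (w : (i : ι) → G.Walk (v i) (v i))
    (hham : ∀ i, (w i).IsHamiltonianCycle)
    (hdisj : ∀ i j, i ≠ j → ∀ e, e ∈ (w i).edges → e ∉ (w j).edges)
    (hcard : Fintype.card ι * Fintype.card V = #G.edgeFinset) :
    G.HasHamiltonianDecomposition ι := by
  refine ⟨v, w, hham, hdisj, fun e => ⟨fun he => ?_, fun ⟨i, hi⟩ => (w i).edges_subset_edgeSet hi⟩⟩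
  refine Walk.exists_mem_edges_of_sum_length_eq (fun i => (hham i).isCycle.isTrail) hdisj ?_ he
  simp only [fun i => (hham i).length_eq]
  simp [hcard]

theorem cycleGraph.exists_isHamiltonianCycle {n : ℕ} (hn : 3 ≤ n) :
    ∃ (v : Fin n) (p : (cycleGraph n).Walk v v), p.IsHamiltonianCycle := by
  obtain ⟨m, rfl⟩ := Nat.exists_eq_add_of_le' hn
  exact ⟨0, cycleGraph.cycle m,
    Walk.isHamiltonianCycle_iff_isCycle_and_length_eq.2 ⟨cycleGraph.isCycle_cycle, by simp⟩⟩

theorem cycleGraph.exists_eq_add_one_of_mem_edgeSet {n : ℕ} [NeZero n] {e : Sym2 (Fin n)}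
    (he : e ∈ (cycleGraph n).edgeSet) : ∃ a, e = s(a, a + 1) := by
  have eq_add_one {a b : Fin n} (h : ((a - b : Fin n) : ℕ) = 1) : a = b + 1 :=
    sub_eq_iff_eq_add'.1 <| Fin.ext <| by rw [h, Fin.val_one', Nat.mod_eq_of_lt (h ▸ (a - b).isLt)]
  induction e using Sym2.ind with
  | _ u v =>
    rcases cycleGraph_adj'.1 ((mem_edgeSet _).1 he) with h | h
    · exact ⟨v, by rw [Sym2.eq_swap, eq_add_one h]⟩
    · exact ⟨u, by rw [eq_add_one h]⟩

namespace Walecki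

variable {n : ℕ}

def zigzag (t : ℕ) : ZMod n :=
  if Even t then -((t / 2 : ℕ) : ZMod n) else ((t / 2 + 1 : ℕ) : ZMod n)

theorem zigzag_two_mul (s : ℕ) : zigzag (2 * s) = -(s : ZMod n) := by
  simp [zigzag]

theorem zigzag_two_mul_add_one (s : ℕ) : zigzag (2 * s + 1) = (s + 1 : ZMod n) := by
  simp [zigzag, Nat.add_div_of_dvd_right]

theorem zigzag_two_mul_sub_one {s : ℕ} (hs : 0 < s) : zigzag (2 * s - 1) = (s : ZMod n) := by
  obtain ⟨r, rfl⟩ := Nat.exists_eq_add_one_of_ne_zero hs.ne'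
  rw [show 2 * (r + 1) - 1 = 2 * r + 1 by omega, zigzag_two_mul_add_one, Nat.cast_succ]

theorem zigzag_add_zigzag_succ (t : ℕ) :
    zigzag t + zigzag (t + 1) = (((t + 1) % 2 : ℕ) : ZMod n) := by
  obtain ⟨s, rfl | rfl⟩ := Nat.even_or_odd' t
  · rw [zigzag_two_mul, zigzag_two_mul_add_one]
    simp
  · rw [zigzag_two_mul_add_one, show 2 * s + 1 + 1 = 2 * (s + 1) by ring, zigzag_two_mul]
    simp

theorem exists_zigzag_eq [NeZero n] (x : ZMod n) : ∃ t < n, zigzag t = x := by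
  obtain ⟨m, hm, rfl⟩ : ∃ m < n, (m : ZMod n) = x := ⟨x.val, x.val_lt, ZMod.natCast_zmod_val x⟩
  rcases Nat.eq_zero_or_pos m with rfl | hm0
  · exact ⟨0, NeZero.pos n, by simp [zigzag]⟩
  by_cases h : 2 * m ≤ n
  · refine ⟨2 * (m - 1) + 1, by omega, ?_⟩
    rw [zigzag_two_mul_add_one, Nat.cast_sub hm0, Nat.cast_one, sub_add_cancel]
  · refine ⟨2 * (n - m), by omega, ?_⟩
    rw [zigzag_two_mul, Nat.cast_sub hm.le, ZMod.natCast_self, zero_sub, neg_neg]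

def vertex : ℕ → Option (ZMod n)
  | 0 => none
  | t + 1 => some (zigzag t)

theorem vertex_of_pos {t : ℕ} (ht : 0 < t) : vertex t = some (zigzag (n := n) (t - 1)) := by
  obtain ⟨s, rfl⟩ := Nat.exists_eq_add_one_of_ne_zero ht.ne'
  rfl

def edgeSum : Sym2 (Option (ZMod n)) → ZMod n :=
  Sym2.lift ⟨fun
    | some x, some y => x + y
    | some x, none | none, some x => 2 * x
    | none, none => 0, by rintro (_ | x) (_ | y) <;> simp [add_comm]⟩

theorem edgeSum_vertex (t : ℕ) :
    edgeSum s(vertex t, vertex (t + 1)) = ((t % 2 : ℕ) : ZMod n) := by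
  cases t with
  | zero => simp [vertex, edgeSum, zigzag]
  | succ t => simp [vertex, edgeSum, zigzag_add_zigzag_succ]

theorem edgeSum_map_add (x : ZMod n) {e : Sym2 (Option (ZMod n))} (he : ¬e.IsDiag) :
    edgeSum (Sym2.map (Option.map (· + x)) e) = edgeSum e + 2 * x := by
  induction e using Sym2.ind with
  | _ a b => rcases a with _ | a <;> rcases b with _ | b <;> simp_all [edgeSum] <;> ring

theorem vertex_bijective [NeZero n] :
    Function.Bijective fun a : Fin (n + 1) => vertex (n := n) a := by
  refine (Fintype.bijective_iff_surjective_and_card _).2 ⟨?_, by simp [ZMod.card]⟩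
  rintro (_ | x)
  · exact ⟨0, rfl⟩
  · obtain ⟨t, ht, rfl⟩ := exists_zigzag_eq x
    exact ⟨⟨t + 1, by omega⟩, rfl⟩

noncomputable def vertexEquiv [NeZero n] : Fin (n + 1) ≃ Option (ZMod n) :=
  Equiv.ofBijective _ vertex_bijective

noncomputable def cycleHom [NeZero n] (x : ZMod n) :
    cycleGraph (n + 1) →g (⊤ : SimpleGraph (Option (ZMod n))) :=
  (Iso.completeGraph (vertexEquiv.trans (Equiv.optionCongr (Equiv.addRight x)))).toHom.comp
    (Hom.ofLE le_top)

theorem cycleHom_bijective [NeZero n] (x : ZMod n) : Function.Bijective (cycleHom x) :=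
  (vertexEquiv.trans (Equiv.optionCongr (Equiv.addRight x))).bijective

theorem eq_of_natCast_add_two_mul_eq {k a b i j : ℕ} (ha : a < 2) (hb : b < 2) (hi : i < k)
    (hj : j < k) (h : (a + 2 * i : ZMod (2 * k)) = b + 2 * j) : i = j := by
  have := (ZMod.natCast_eq_natCast_iff' (a + 2 * i) (b + 2 * j) (2 * k)).1 (by exact_mod_cast h)
  rw [Nat.mod_eq_of_lt (by omega), Nat.mod_eq_of_lt (by omega)] at this
  omega

variable {k : ℕ} [NeZero k]

theorem edgeSum_vertex_fin (a : Fin (2 * k + 1)) :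
    edgeSum s(vertex a, vertex ↑(a + 1)) = ((a % 2 : ℕ) : ZMod (2 * k)) := by
  rcases (Fin.le_last a).lt_or_eq with ha | rfl
  · rw [Fin.val_add_one_of_lt ha, edgeSum_vertex]
  · have hk := NeZero.pos k
    rw [Fin.last_add_one, Fin.val_zero, Fin.val_last, vertex_of_pos (by omega),
      zigzag_two_mul_sub_one hk]
    have h2k : (2 * k : ZMod (2 * k)) = 0 := by exact_mod_cast ZMod.natCast_self (2 * k)
    simp [vertex, edgeSum, h2k]

theorem exists_edgeSum_eq_of_mem_edges_map {v : Fin (2 * k + 1)}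
    {p : (cycleGraph (2 * k + 1)).Walk v v} (x : ZMod (2 * k)) {e : Sym2 (Option (ZMod (2 * k)))}
    (he : e ∈ (p.map (cycleHom x)).edges) : ∃ a : ℕ, a < 2 ∧ edgeSum e = a + 2 * x := by
  have hdiag := (⊤ : SimpleGraph _).not_isDiag_of_mem_edgeSet
    ((p.map (cycleHom x)).edges_subset_edgeSet he)
  rw [Walk.edges_map, List.mem_map] at he
  obtain ⟨e, he, rfl⟩ := he
  obtain ⟨a, rfl⟩ := cycleGraph.exists_eq_add_one_of_mem_edgeSet (p.edges_subset_edgeSet he)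
  change ¬(Sym2.map (Option.map (· + x)) s(vertex a, vertex ↑(a + 1))).IsDiag at hdiag
  rw [Sym2.isDiag_map (Option.map_injective (add_left_injective x))] at hdiag
  exact ⟨a % 2, Nat.mod_lt _ two_pos, by rw [← edgeSum_vertex_fin, ← edgeSum_map_add _ hdiag]; rfl⟩

theorem top_hasHamiltonianDecomposition :
    (⊤ : SimpleGraph (Option (ZMod (2 * k)))).HasHamiltonianDecomposition (Fin k) := by
  obtain ⟨v, p, hp⟩ := cycleGraph.exists_isHamiltonianCycle (n := 2 * k + 1)
    (by have := NeZero.pos k; omega)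
  refine hasHamiltonianDecomposition_of_pairwise_disjoint
    (fun i => p.map (cycleHom ((i : ℕ) : ZMod (2 * k))))
    (fun i => hp.map (cycleHom_bijective _)) (fun i j hij e hi hj => hij ?_) ?_
  · obtain ⟨a, ha, hai⟩ := exists_edgeSum_eq_of_mem_edges_map _ hi
    obtain ⟨b, hb, hbj⟩ := exists_edgeSum_eq_of_mem_edges_map _ hj
    exact Fin.ext (eq_of_natCast_add_two_mul_eq ha hb i.isLt j.isLt (hai.symm.trans hbj))
  · rw [card_edgeFinset_top_eq_card_choose_two, Nat.choose_two_right]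
    simp only [Fintype.card_fin, Fintype.card_option, ZMod.card]
    rw [Nat.add_sub_cancel, show (2 * k + 1) * (2 * k) = k * (2 * k + 1) * 2 by ring,
      Nat.mul_div_cancel _ two_pos]

end Walecki

end SimpleGraph

/-- For every odd `n ≥ 3`, the edge set of the complete graph `K_n` can be partitioned into
exactly `(n-1)/2` pairwise edge-disjoint Hamiltonian cycles: there exist `(n-1)/2`
Hamiltonian cycles whose edge sets are pairwise disjoint and whose union is the whole
edge set of `K_n`. -/
theorem hamiltonian_decomposition_of_odd (n : ℕ) (hn : 3 ≤ n) (hodd : Odd n) :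
    ∃ (v : Fin ((n - 1) / 2) → Fin n)
      (w : (i : Fin ((n - 1) / 2)) → (⊤ : SimpleGraph (Fin n)).Walk (v i) (v i)),
      (∀ i, (w i).IsHamiltonianCycle) ∧
      (∀ i j, i ≠ j → ∀ e, e ∈ (w i).edges → e ∉ (w j).edges) ∧
      (∀ e, e ∈ (⊤ : SimpleGraph (Fin n)).edgeSet ↔ ∃ i, e ∈ (w i).edges) := by
  obtain ⟨k, rfl⟩ := hodd
  have : NeZero k := ⟨by omega⟩
  rw [show (2 * k + 1 - 1) / 2 = k by omega]
  exact Walecki.top_hasHamiltonianDecomposition.map (Iso.completeGraph Walecki.vertexEquiv.symm)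
end

section
/- For every even natural number n ≥ 4, there exist n/2 Hamiltonian cycles in the complete graph K_n whose edge sets together cover every edge of K_n. -/
/-! For `t : Fin n` the zigzag sequence `t, t + 1, t - 1, t + 2, t - 2, …, t + n/2` runs through
all of `Fin n`, so closing it up gives a Hamiltonian cycle of `K_n`. Its consecutive entries sum
alternately to `2t + 1` and `2t`; as the sequence is a bijection, every edge `{x, y}` with
`x + y = 2t + 1` or `x + y = 2t` joins two consecutive entries. Every residue mod `n` is `2t` or
`2t + 1` for some `t < n/2`, so the `n/2` zigzag cycles with offsets `t < n/2` cover all edges. -/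

namespace SimpleGraph

variable {V : Type*} [DecidableEq V] {G : SimpleGraph V}

theorem exists_isHamiltonianCycle_of_bijOn {f : ℕ → V} {n : ℕ} (hn : 3 ≤ n)
    (hf : Set.BijOn f (Set.Iio n) Set.univ) (hadj : ∀ i, i + 1 < n → G.Adj (f i) (f (i + 1)))
    (hclose : G.Adj (f (n - 1)) (f 0)) :
    ∃ v, ∃ c : G.Walk v v, c.IsHamiltonianCycle ∧
      ∀ i, i + 1 < n → s(f i, f (i + 1)) ∈ c.edges := by
  set l := (List.range n).map f
  have hl : l.length = n := by simp [l]
  have hne : l ≠ [] := List.ne_nil_of_length_pos (by omega)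
  have hchain : l.IsChain G.Adj := by
    rw [List.isChain_iff_getElem]
    intro i hi
    simpa [l] using hadj i (by simpa [l] using hi)
  obtain ⟨p, hsupp⟩ : ∃ p : G.Walk (f 0) (f (n - 1)), p.support = l :=
    ⟨(Walk.ofSupport l hne hchain).copy (by simp [l]) (by simp [l, List.getLast_eq_getElem]),
      by simp⟩
  have hlen : p.length = n - 1 := by
    have := p.length_support
    rw [hsupp, hl] at this
    omega
  have hpath : p.IsPath := by
    rw [Walk.isPath_def, hsupp]
    exact List.nodup_range.map_on fun i hi j hj h =>
      hf.injOn (by simpa using hi) (by simpa using hj) h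
  refine ⟨_, Walk.cons hclose p, ?_, fun i hi => ?_⟩
  · rw [Walk.isHamiltonianCycle_isCycle_and_isHamiltonian_tail,
      Walk.isCycle_iff_isPath_tail_and_le_length]
    have htail : (Walk.cons hclose p).tail.IsPath := by simpa using hpath
    refine ⟨⟨htail, by rw [Walk.length_cons, hlen]; omega⟩,
      htail.isHamiltonian_of_mem fun w => ?_⟩
    obtain ⟨i, hi, rfl⟩ := hf.surjOn (Set.mem_univ w)
    simpa [hsupp, l] using ⟨i, hi, rfl⟩
  · refine List.mem_cons_of_mem _ ((Walk.mk_mem_edges_iff_exists p).mpr ⟨i, by omega, ?_⟩)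
    rw [p.getVert_eq_support_getElem (by omega), p.getVert_eq_support_getElem (by omega)]
    simp [hsupp, l]

theorem exists_isHamiltonianCycle_top_of_bijOn {f : ℕ → V} {n : ℕ} (hn : 3 ≤ n)
    (hf : Set.BijOn f (Set.Iio n) Set.univ) :
    ∃ v, ∃ c : (⊤ : SimpleGraph V).Walk v v, c.IsHamiltonianCycle ∧
      ∀ i, i + 1 < n → s(f i, f (i + 1)) ∈ c.edges :=
  exists_isHamiltonianCycle_of_bijOn hn hf
    (fun i hi => hf.injOn.ne (Set.mem_Iio.2 (by omega)) (Set.mem_Iio.2 hi) (by omega))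
    (hf.injOn.ne (Set.mem_Iio.2 (by omega)) (Set.mem_Iio.2 (by omega)) (by omega))

end SimpleGraph

section Zigzag

variable {R : Type*} [AddGroupWithOne R]

def zigzag (t : R) (j : ℕ) : R :=
  if Even j then t - (j / 2 : ℕ) else t + (j / 2 : ℕ) + 1

@[simp] lemma zigzag_two_mul (t : R) (k : ℕ) : zigzag t (2 * k) = t - k := by
  simp [zigzag]

@[simp] lemma zigzag_two_mul_add_one (t : R) (k : ℕ) : zigzag t (2 * k + 1) = t + k + 1 := by
  simp [zigzag, show (2 * k + 1) / 2 = k by omega]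

end Zigzag

namespace Fin

open Fin.CommRing

variable {n : ℕ} [NeZero n]

lemma zigzag_injOn (hn : Even n) (t : Fin n) : Set.InjOn (zigzag t) (Set.Iio n) := by
  obtain ⟨m, rfl⟩ := hn
  have hcast : ∀ a b : ℕ, a < m + m → b < m + m → (a : Fin (m + m)) = b → a = b :=
    fun a b ha hb h => by
      simpa [Fin.val_cast_of_lt ha, Fin.val_cast_of_lt hb] using congrArg Fin.val h
  have hsum : ∀ a b : ℕ, 2 * a < m + m → 2 * b < m + m →
      ((a + b + 1 : ℕ) : Fin (m + m)) ≠ 0 :=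
    fun a b ha hb h => by
      have := Nat.le_of_dvd (by omega) (Fin.natCast_eq_zero.mp h); omega
  intro i hi j hj h
  simp only [Set.mem_Iio] at hi hj
  obtain ⟨a, rfl | rfl⟩ := Nat.even_or_odd' i <;>
    obtain ⟨b, rfl | rfl⟩ := Nat.even_or_odd' j <;>
    simp only [zigzag_two_mul, zigzag_two_mul_add_one] at h
  · rw [hcast a b (by omega) (by omega) (sub_right_inj.mp h)]
  · exact absurd (by push_cast; linear_combination -h) (hsum a b (by omega) (by omega))
  · exact absurd (by push_cast; linear_combination h) (hsum b a (by omega) (by omega))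
  · rw [hcast a b (by omega) (by omega) (by simpa using h)]

lemma zigzag_bijOn (hn : Even n) (t : Fin n) : Set.BijOn (zigzag t) (Set.Iio n) Set.univ := by
  have hinj : Function.Injective fun j : Fin n => zigzag t j :=
    fun i j h => Fin.ext (zigzag_injOn hn t i.isLt j.isLt h)
  refine ⟨Set.mapsTo_univ _ _, zigzag_injOn hn t, fun x _ => ?_⟩
  obtain ⟨j, hj⟩ := Finite.surjective_of_injective hinj x
  exact ⟨j, j.isLt, hj⟩

lemma exists_zigzag_succ_eq_of_add_eq_two_mul_add_one (hn : Even n) {t x y : Fin n}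
    (h : x + y = 2 * t + 1) : ∃ j, j + 1 < n ∧ s(zigzag t j, zigzag t (j + 1)) = s(x, y) := by
  obtain ⟨j, hj, rfl⟩ := (zigzag_bijOn hn t).surjOn (Set.mem_univ x)
  simp only [Set.mem_Iio] at hj
  obtain ⟨k, rfl | rfl⟩ := Nat.even_or_odd' j
  · refine ⟨2 * k, by obtain ⟨m, rfl⟩ := hn; omega, ?_⟩
    rw [zigzag_two_mul] at h ⊢
    rw [zigzag_two_mul_add_one, show y = t + k + 1 by linear_combination h]
  · refine ⟨2 * k, by omega, ?_⟩
    rw [zigzag_two_mul_add_one] at h ⊢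
    rw [zigzag_two_mul, show y = t - k by linear_combination h, Sym2.eq_swap]

lemma exists_zigzag_succ_eq_of_add_eq_two_mul (hn : Even n) {t x y : Fin n} (hxy : x ≠ y)
    (h : x + y = 2 * t) : ∃ j, j + 1 < n ∧ s(zigzag t j, zigzag t (j + 1)) = s(x, y) := by
  obtain ⟨j, hj, rfl⟩ := (zigzag_bijOn hn t).surjOn (Set.mem_univ x)
  simp only [Set.mem_Iio] at hj
  obtain ⟨k, rfl | rfl⟩ := Nat.even_or_odd' j
  · obtain _ | k := k
    · rw [zigzag_two_mul, Nat.cast_zero, sub_zero] at h hxy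
      exact absurd (by linear_combination -h) hxy
    refine ⟨2 * k + 1, by omega, ?_⟩
    rw [zigzag_two_mul] at h ⊢
    rw [zigzag_two_mul_add_one, show 2 * k + 1 + 1 = 2 * (k + 1) by ring, zigzag_two_mul,
      show y = t + k + 1 by push_cast at h; linear_combination h, Sym2.eq_swap]
  · rw [zigzag_two_mul_add_one] at h hxy
    obtain hk | hk := lt_or_ge (2 * k + 2) n
    · refine ⟨2 * k + 1, hk, ?_⟩
      rw [zigzag_two_mul_add_one, show 2 * k + 1 + 1 = 2 * (k + 1) by ring, zigzag_two_mul,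
        show y = t - (k + 1 : ℕ) by push_cast; linear_combination h]
    · obtain rfl : n = 2 * k + 2 := by obtain ⟨m, rfl⟩ := hn; omega
      refine absurd ?_ hxy
      have : ((2 * k + 2 : ℕ) : Fin (2 * k + 2)) = 0 := Fin.natCast_self _
      push_cast at this
      linear_combination this - h

lemma exists_eq_two_mul_or_eq_two_mul_add_one (hn : Even n) (s : Fin n) :
    ∃ i < n / 2, s = 2 * (i : Fin n) ∨ s = 2 * (i : Fin n) + 1 := by
  obtain ⟨k, hk | hk⟩ := Nat.even_or_odd' s.val
  · refine ⟨k, by obtain ⟨m, rfl⟩ := hn; omega, Or.inl ?_⟩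
    rw [← Fin.cast_val_eq_self s, hk, Nat.cast_mul, Nat.cast_ofNat]
  · refine ⟨k, by obtain ⟨m, rfl⟩ := hn; omega, Or.inr ?_⟩
    rw [← Fin.cast_val_eq_self s, hk]
    push_cast; rfl

lemma exists_zigzag_succ_eq (hn : Even n) {x y : Fin n} (hxy : x ≠ y) :
    ∃ i < n / 2, ∃ j, j + 1 < n ∧
      s(zigzag (i : Fin n) j, zigzag (i : Fin n) (j + 1)) = s(x, y) := by
  obtain ⟨i, hi, hsum | hsum⟩ := exists_eq_two_mul_or_eq_two_mul_add_one hn (x + y)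
  · exact ⟨i, hi, exists_zigzag_succ_eq_of_add_eq_two_mul hn hxy hsum⟩
  · exact ⟨i, hi, exists_zigzag_succ_eq_of_add_eq_two_mul_add_one hn hsum⟩

end Fin

/-- For every even `n ≥ 4`, there exist `n/2` Hamiltonian cycles in the complete graph
`K_n` whose edge sets together cover every edge of `K_n`. -/
theorem hamiltonian_covering_of_even (n : ℕ) (hn : 4 ≤ n) (heven : Even n) :
    ∃ (v : Fin (n / 2) → Fin n)
      (w : (i : Fin (n / 2)) → (⊤ : SimpleGraph (Fin n)).Walk (v i) (v i)),
      (∀ i, (w i).IsHamiltonianCycle) ∧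
      (∀ e ∈ (⊤ : SimpleGraph (Fin n)).edgeSet, ∃ i, e ∈ (w i).edges) := by
  open Fin.CommRing in
  have : NeZero n := ⟨by omega⟩
  have hcycle (i : Fin (n / 2)) : ∃ v, ∃ c : (⊤ : SimpleGraph (Fin n)).Walk v v,
      c.IsHamiltonianCycle ∧ ∀ j, j + 1 < n →
        s(zigzag (i : Fin n) j, zigzag (i : Fin n) (j + 1)) ∈ c.edges :=
    SimpleGraph.exists_isHamiltonianCycle_top_of_bijOn (by omega) (Fin.zigzag_bijOn heven _)
  choose v w hham hedges using hcycle
  refine ⟨v, w, hham, fun e he => ?_⟩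
  induction e using Sym2.ind with
  | h x y =>
    obtain ⟨i, hi, j, hj, hxy⟩ := Fin.exists_zigzag_succ_eq heven he
    exact ⟨⟨i, hi⟩, hxy ▸ hedges _ j hj⟩
end

section
/- Let m and k be natural numbers with 1 ≤ k ≤ m. Let (Y_t)_{t≥1} be an i.i.d. sequence of random variables on a probability space, each uniformly distributed over the family of k-element subsets of {1, …, m}, and let X be the first time t such that the union Y_1 ∪ ⋯ ∪ Y_t equals {1, …, m}. Then for every natural number s, the probability that X > s equals Σ_{i=1}^{m} (−1)^{i+1} · C(m, i) · ( C(m−i, k) / C(m, k) )^s, where C(a, b) denotes the binomial coefficient. -/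
open MeasureTheory ProbabilityTheory

section Aux
open Finset

open Finset

lemma badCount (m k s : ℕ) :
    (((Finset.univ.filter (fun g : Fin s → Finset (Fin m) =>
        (∀ j, (g j).card = k) ∧ Finset.univ.biUnion g ≠ Finset.univ)).card : ℤ))
      = ∑ i ∈ Finset.Icc 1 m, (-1:ℤ)^(i+1) * (m.choose i) * (((m-i).choose k)^s : ℕ) := by
  classical
  set A : Fin m → Finset (Fin s → Finset (Fin m)) := fun a =>
    Finset.univ.filter (fun g => (∀ j, (g j).card = k) ∧ ∀ j, a ∉ g j) with hA
  have hunion : (Finset.univ.filter (fun g : Fin s → Finset (Fin m) =>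
      (∀ j, (g j).card = k) ∧ Finset.univ.biUnion g ≠ Finset.univ))
      = Finset.univ.biUnion A := by
    ext g
    simp only [hA, mem_filter, mem_biUnion, mem_univ, true_and]
    constructor
    · rintro ⟨hcard, hne⟩
      rw [Ne, ← Finset.compl_eq_empty_iff, ← Ne, ← Finset.nonempty_iff_ne_empty] at hne
      obtain ⟨a, ha⟩ := hne
      rw [Finset.mem_compl, mem_biUnion] at ha
      push_neg at ha
      exact ⟨a, hcard, fun j => ha j (mem_univ j)⟩
    · rintro ⟨a, hcard, ha⟩
      refine ⟨hcard, fun h => ?_⟩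
      have : a ∈ Finset.univ.biUnion g := h ▸ mem_univ a
      rw [mem_biUnion] at this
      obtain ⟨j, -, hj⟩ := this
      exact ha j hj
  have hinf : ∀ (t : Finset (Fin m)) (ht : t.Nonempty),
      (t.inf' ht A).card = ((m - t.card).choose k)^s := by
    intro t ht
    have : t.inf' ht A = Fintype.piFinset (fun _ : Fin s => Finset.powersetCard k tᶜ) := by
      ext g
      simp only [Finset.mem_inf', hA, mem_filter, mem_univ, true_and,
        Fintype.mem_piFinset, Finset.mem_powersetCard]
      constructor
      · intro h j
        obtain ⟨a0, ha0⟩ := ht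
        refine ⟨fun b hb => Finset.mem_compl.2 fun hbt => (h b hbt).2 j hb, (h a0 ha0).1 j⟩
      · intro h a hat
        exact ⟨fun j => (h j).2, fun j hj => Finset.mem_compl.1 ((h j).1 hj) hat⟩
    rw [this, Fintype.card_piFinset]
    simp [Finset.card_powersetCard, Finset.card_compl]
  rw [hunion, Finset.inclusion_exclusion_card_biUnion]
  have step : ∀ t : ((Finset.univ : Finset (Fin m)).powerset.filter (·.Nonempty)),
      ((-1:ℤ)) ^ (t.1.card + 1) * (t.1.inf' (mem_filter.1 t.2).2 A).card
        = (-1:ℤ) ^ (t.1.card + 1) * (((m - t.1.card).choose k)^s : ℕ) := by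
    intro t
    rw [hinf t.1 (mem_filter.1 t.2).2]
  rw [Finset.sum_congr rfl (fun t _ => step t)]
  rw [Finset.sum_coe_sort ((Finset.univ : Finset (Fin m)).powerset.filter (·.Nonempty))
    (fun t => (-1:ℤ) ^ (t.card + 1) * (((m - t.card).choose k)^s : ℕ))]
  have hsplit := Finset.sum_filter_add_sum_filter_not
    ((Finset.univ : Finset (Fin m)).powerset) (·.Nonempty)
    (fun t => (-1:ℤ) ^ (t.card + 1) * (((m - t.card).choose k)^s : ℕ))
  have hempty : ((Finset.univ : Finset (Fin m)).powerset).filter (fun t => ¬ t.Nonempty)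
      = {∅} := by
    ext t
    simp [Finset.not_nonempty_iff_eq_empty]
  rw [hempty, Finset.sum_singleton] at hsplit
  have hfull : ∑ t ∈ (Finset.univ : Finset (Fin m)).powerset,
      (-1:ℤ) ^ (t.card + 1) * (((m - t.card).choose k)^s : ℕ)
      = ∑ i ∈ Finset.range (m+1),
          (m.choose i) • ((-1:ℤ) ^ (i + 1) * (((m - i).choose k)^s : ℕ)) := by
    rw [Finset.sum_powerset_apply_card (fun i => (-1:ℤ) ^ (i + 1) * (((m - i).choose k)^s : ℕ))]
    simp
  have hrange : Finset.range (m+1) = insert 0 (Finset.Icc 1 m) := by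
    ext i; simp [Finset.mem_Icc]; omega
  rw [hrange, Finset.sum_insert (by simp)] at hfull
  have h0 : (m.choose 0) • ((-1:ℤ) ^ (0 + 1) * (((m - 0).choose k)^s : ℕ))
      = -(((m.choose k)^s : ℕ) : ℤ) := by simp
  have hE : (-1:ℤ) ^ ((∅ : Finset (Fin m)).card + 1)
      * (((m - (∅ : Finset (Fin m)).card).choose k)^s : ℕ)
      = -(((m.choose k)^s : ℕ) : ℤ) := by simp
  rw [h0] at hfull
  rw [hE] at hsplit
  have hmain : ∑ t ∈ ((Finset.univ : Finset (Fin m)).powerset).filter (·.Nonempty),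
      (-1:ℤ) ^ (t.card + 1) * (((m - t.card).choose k)^s : ℕ)
      = ∑ i ∈ Finset.Icc 1 m,
          (m.choose i) • ((-1:ℤ) ^ (i + 1) * (((m - i).choose k)^s : ℕ)) := by
    linarith [hsplit, hfull]
  rw [hmain]
  refine Finset.sum_congr rfl fun i _ => ?_
  push_cast
  ring

lemma badCount_le (m k s : ℕ) :
    ((Finset.univ.filter (fun g : Fin s → Finset (Fin m) =>
        (∀ j, (g j).card = k) ∧ Finset.univ.biUnion g ≠ Finset.univ)).card)
      ≤ m * (((m-1).choose k)^s) := by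
  classical
  have hsub : (Finset.univ.filter (fun g : Fin s → Finset (Fin m) =>
      (∀ j, (g j).card = k) ∧ Finset.univ.biUnion g ≠ Finset.univ))
      ⊆ Finset.univ.biUnion (fun a : Fin m =>
          Fintype.piFinset (fun _ : Fin s => Finset.powersetCard k {a}ᶜ)) := by
    intro g hg
    rw [mem_filter] at hg
    obtain ⟨-, hcard, hne⟩ := hg
    rw [Ne, ← Finset.compl_eq_empty_iff, ← Ne, ← Finset.nonempty_iff_ne_empty] at hne
    obtain ⟨a, ha⟩ := hne
    rw [Finset.mem_compl, mem_biUnion] at ha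
    push_neg at ha
    rw [mem_biUnion]
    refine ⟨a, mem_univ a, ?_⟩
    rw [Fintype.mem_piFinset]
    intro j
    rw [Finset.mem_powersetCard]
    exact ⟨fun b hb => Finset.mem_compl.2 (fun hba => by
      rw [Finset.mem_singleton] at hba; exact ha j (mem_univ j) (hba ▸ hb)), hcard j⟩
  calc _ ≤ (Finset.univ.biUnion (fun a : Fin m =>
          Fintype.piFinset (fun _ : Fin s => Finset.powersetCard k {a}ᶜ))).card :=
        Finset.card_le_card hsub
    _ ≤ ∑ a : Fin m, (Fintype.piFinset (fun _ : Fin s => Finset.powersetCard k {a}ᶜ)).card :=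
        Finset.card_biUnion_le
    _ = m * (((m-1).choose k)^s) := by
        rw [Finset.sum_congr rfl (fun a _ => ?_), Finset.sum_const, card_univ,
          Fintype.card_fin, smul_eq_mul]
        rw [Fintype.card_piFinset]
        simp [Finset.card_powersetCard, Finset.card_compl]

lemma prodKey (m k : ℕ)
    {Ω : Type} [MeasurableSpace Ω] (μ : Measure Ω)
    [MeasurableSpace (Finset (Fin m))] [MeasurableSingletonClass (Finset (Fin m))]
    (Y : ℕ → Ω → Finset (Fin m))
    (hindep : iIndepFun Y μ)
    (hdist : ∀ t, ∀ s : Finset (Fin m),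
      μ {ω | Y t ω = s} = if s.card = k then (1 : ENNReal) / (m.choose k) else 0)
    (n : ℕ) (g : Fin n → Finset (Fin m)) :
    μ {ω | ∀ j : Fin n, Y (j+1) ω = g j}
      = ∏ j : Fin n, (if (g j).card = k then (1 : ENNReal) / (m.choose k) else 0) := by
  classical
  set G : ℕ → Finset (Fin m) := fun i => if h : i - 1 < n then g ⟨i-1, h⟩ else ∅ with hG
  have hkey := hindep.measure_inter_preimage_eq_mul (Finset.Icc 1 n)
    (sets := fun i => {G i}) (fun i _ => measurableSet_singleton _)
  have hset : {ω | ∀ j : Fin n, Y (j+1) ω = g j}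
      = ⋂ i ∈ Finset.Icc 1 n, Y i ⁻¹' {G i} := by
    ext ω
    simp only [Set.mem_setOf_eq, Set.mem_iInter, Set.mem_preimage, Set.mem_singleton_iff,
      Finset.mem_Icc]
    constructor
    · intro h i hi
      have hlt : i - 1 < n := by omega
      have := h ⟨i-1, hlt⟩
      simp only at this
      rw [hG]
      simp only [hlt, dif_pos]
      rw [show (⟨i-1, hlt⟩ : Fin n).val + 1 = i by simp; omega] at this
      exact this
    · intro h j
      have hj1 : 1 ≤ (j : ℕ) + 1 ∧ (j : ℕ) + 1 ≤ n := ⟨by omega, by omega⟩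
      have := h ((j : ℕ) + 1) hj1
      rw [hG] at this
      have hlt : (j : ℕ) + 1 - 1 < n := by omega
      simp only [hlt, dif_pos] at this
      have hfin : (⟨(j : ℕ) + 1 - 1, hlt⟩ : Fin n) = j := Fin.ext (by simp)
      rw [hfin] at this
      exact this
  rw [hset, hkey]
  have hpre : ∀ i, (Y i ⁻¹' {G i}) = {ω | Y i ω = G i} := by
    intro i; ext ω; simp
  have h1 : ∏ i ∈ Finset.Icc 1 n, μ (Y i ⁻¹' {G i})
      = ∏ i ∈ Finset.Icc 1 n,
          (if (G i).card = k then (1 : ENNReal) / (m.choose k) else 0) := by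
    refine Finset.prod_congr rfl fun i _ => ?_
    rw [hpre, hdist]
  rw [h1]
  have hIcc : Finset.Icc 1 n
      = (Finset.range n).map ⟨fun j => j + 1, add_left_injective 1⟩ := by
    ext i
    simp only [Finset.mem_Icc, Finset.mem_map, Finset.mem_range, Function.Embedding.coeFn_mk]
    constructor
    · intro h; exact ⟨i - 1, by omega, by omega⟩
    · rintro ⟨j, hj, rfl⟩; omega
  rw [hIcc, Finset.prod_map]
  simp only [Function.Embedding.coeFn_mk]
  rw [← Fin.prod_univ_eq_prod_range
    (fun j => (if (G (j+1)).card = k then (1 : ENNReal) / (m.choose k) else 0)) n]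
  refine Finset.prod_congr rfl fun j _ => ?_
  have hlt : (j : ℕ) + 1 - 1 < n := by omega
  rw [hG]
  simp only [hlt, dif_pos]
  have hfin : (⟨(j : ℕ) + 1 - 1, hlt⟩ : Fin n) = j := Fin.ext (by simp)
  rw [hfin]


open Finset in
lemma measE (m k : ℕ)
    {Ω : Type} [MeasurableSpace Ω] (μ : Measure Ω)
    [MeasurableSpace (Finset (Fin m))] [MeasurableSingletonClass (Finset (Fin m))]
    (Y : ℕ → Ω → Finset (Fin m))
    (hmeas : ∀ t, Measurable (Y t))
    (hindep : iIndepFun Y μ)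
    (hdist : ∀ t, ∀ s : Finset (Fin m),
      μ {ω | Y t ω = s} = if s.card = k then (1 : ENNReal) / (m.choose k) else 0)
    (n : ℕ) :
    μ {ω | (Finset.Icc 1 n).biUnion (fun i => Y i ω) ≠ Finset.univ}
      = ((Finset.univ.filter (fun g : Fin n → Finset (Fin m) =>
          (∀ j, (g j).card = k) ∧ Finset.univ.biUnion g ≠ Finset.univ)).card : ENNReal)
        / ((m.choose k : ENNReal))^n := by
  classical
  set E : (Fin n → Finset (Fin m)) → Set Ω := fun g => {ω | ∀ j : Fin n, Y (j+1) ω = g j}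
    with hE
  set Bad : Finset (Fin n → Finset (Fin m)) :=
    Finset.univ.filter (fun g => Finset.univ.biUnion g ≠ Finset.univ) with hBad
  have hUV : ∀ ω, (Finset.Icc 1 n).biUnion (fun i => Y i ω)
      = Finset.univ.biUnion (fun j : Fin n => Y (j+1) ω) := by
    intro ω
    ext a
    simp only [mem_biUnion, Finset.mem_Icc, mem_univ, true_and]
    constructor
    · rintro ⟨i, ⟨h1, h2⟩, ha⟩
      have hlt : i - 1 < n := by omega
      exact ⟨⟨i-1, hlt⟩, by rw [show ((⟨i-1, hlt⟩ : Fin n) : ℕ) + 1 = i by simp; omega]; exact ha⟩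
    · rintro ⟨j, ha⟩
      exact ⟨(j : ℕ) + 1, ⟨by omega, by omega⟩, ha⟩
  have hdecomp : {ω | (Finset.Icc 1 n).biUnion (fun i => Y i ω) ≠ Finset.univ}
      = ⋃ g ∈ Bad, E g := by
    ext ω
    simp only [Set.mem_setOf_eq, Set.mem_iUnion, hUV]
    constructor
    · intro h
      refine ⟨fun j => Y (j+1) ω, ?_, fun j => rfl⟩
      rw [hBad, mem_filter]
      exact ⟨mem_univ _, h⟩
    · rintro ⟨g, hg, hω⟩
      rw [hBad, mem_filter] at hg
      have : (fun j : Fin n => Y (j+1) ω) = g := funext hω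
      rw [this]
      exact hg.2
  have hEmeas : ∀ g, MeasurableSet (E g) := by
    intro g
    have : E g = ⋂ j : Fin n, (Y (j+1)) ⁻¹' {g j} := by
      ext ω; simp [hE, Set.mem_iInter]
    rw [this]
    exact MeasurableSet.iInter fun j => (hmeas _) (measurableSet_singleton _)
  have hdisj : (Bad : Set (Fin n → Finset (Fin m))).PairwiseDisjoint E := by
    intro g hg g' hg' hne
    rw [Function.onFun, Set.disjoint_left]
    intro ω hω hω'
    exact hne (funext fun j => (hω j).symm.trans (hω' j))
  rw [hdecomp, measure_biUnion_finset hdisj (fun g _ => hEmeas g)]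
  have hterm : ∀ g ∈ Bad, μ (E g)
      = ∏ j : Fin n, (if (g j).card = k then (1 : ENNReal) / (m.choose k) else 0) :=
    fun g _ => prodKey m k μ Y hindep hdist n g
  rw [Finset.sum_congr rfl hterm]
  rw [← Finset.sum_filter_add_sum_filter_not Bad (fun g => ∀ j, (g j).card = k)]
  have hz : ∑ g ∈ Bad.filter (fun g => ¬ ∀ j, (g j).card = k),
      ∏ j : Fin n, (if (g j).card = k then (1 : ENNReal) / (m.choose k) else 0) = 0 := by
    refine Finset.sum_eq_zero fun g hg => ?_
    rw [mem_filter] at hg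
    push_neg at hg
    obtain ⟨j, hj⟩ := hg.2
    exact Finset.prod_eq_zero (mem_univ j) (if_neg hj)
  rw [hz, add_zero]
  have hone : ∑ g ∈ Bad.filter (fun g => ∀ j, (g j).card = k),
      ∏ j : Fin n, (if (g j).card = k then (1 : ENNReal) / (m.choose k) else 0)
      = (Bad.filter (fun g => ∀ j, (g j).card = k)).card
          * ((1 : ENNReal) / (m.choose k))^n := by
    rw [Finset.sum_congr rfl (fun g hg => ?_), Finset.sum_const, nsmul_eq_mul]
    rw [mem_filter] at hg
    rw [Finset.prod_congr rfl (fun j _ => if_pos (hg.2 j)), Finset.prod_const, card_univ,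
      Fintype.card_fin]
  rw [hone]
  have hsame : Bad.filter (fun g => ∀ j, (g j).card = k)
      = Finset.univ.filter (fun g : Fin n → Finset (Fin m) =>
          (∀ j, (g j).card = k) ∧ Finset.univ.biUnion g ≠ Finset.univ) := by
    rw [hBad, Finset.filter_filter]
    exact Finset.filter_congr fun g _ => and_comm
  rw [hsame, one_div, div_eq_mul_inv, ENNReal.inv_pow]

end Aux

open Finset in
/-- The `k`-coupon collector's problem, tail probabilities: with `1 ≤ k ≤ m`, draw i.i.d.
uniformly random `k`-element subsets `Y_1, Y_2, …` of `{1, …, m}`, and let `X` be the first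
time `t` with `Y_1 ∪ ⋯ ∪ Y_t = {1, …, m}`.  Then for every `s`,
`P(X > s) = ∑_{i=1}^m (-1)^{i+1} C(m,i) (C(m-i,k)/C(m,k))^s`. -/
theorem kCouponCollector_tail (m k : ℕ) (hk : 1 ≤ k) (hkm : k ≤ m)
    {Ω : Type} [MeasurableSpace Ω] (μ : Measure Ω) [IsProbabilityMeasure μ]
    [MeasurableSpace (Finset (Fin m))] [MeasurableSingletonClass (Finset (Fin m))]
    (Y : ℕ → Ω → Finset (Fin m))
    (hmeas : ∀ t, Measurable (Y t))
    (hindep : iIndepFun Y μ)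
    (hdist : ∀ t, ∀ s : Finset (Fin m),
      μ {ω | Y t ω = s} = if s.card = k then (1 : ENNReal) / (m.choose k) else 0)
    (X : Ω → ℕ)
    (hX : ∀ ω, X ω =
      sInf {t | (Finset.Icc 1 t).biUnion (fun i => Y i ω) = Finset.univ})
    (s : ℕ) :
    (μ {ω | s < X ω}).toReal
      = ∑ i ∈ Finset.Icc 1 m,
          (-1 : ℝ) ^ (i + 1) * (m.choose i) *
            (((m - i).choose k : ℝ) / (m.choose k)) ^ s := by
  classical
  set U : ℕ → Ω → Finset (Fin m) := fun t ω => (Finset.Icc 1 t).biUnion (fun i => Y i ω)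
    with hU
  set B : ℕ → ℕ := fun n => (Finset.univ.filter (fun g : Fin n → Finset (Fin m) =>
      (∀ j, (g j).card = k) ∧ Finset.univ.biUnion g ≠ Finset.univ)).card with hB
  set N : Set Ω := {ω | ∀ t, U t ω ≠ Finset.univ} with hN
  have hC0 : (m.choose k : ENNReal) ≠ 0 := Nat.cast_ne_zero.2 (Nat.choose_pos hkm).ne'
  have hCtop : (m.choose k : ENNReal) ≠ ⊤ := ENNReal.natCast_ne_top _
  -- the bound ratio
  have hDC : (m-1).choose k < m.choose k := by
    obtain ⟨m', rfl⟩ : ∃ m', m = m' + 1 := ⟨m - 1, by omega⟩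
    obtain ⟨k', rfl⟩ : ∃ k', k = k' + 1 := ⟨k - 1, by omega⟩
    rw [Nat.choose_succ_succ' m' k']
    simp only [Nat.add_sub_cancel]
    have : 0 < m'.choose k' := Nat.choose_pos (by omega)
    omega
  set r : ENNReal := ((m-1).choose k : ENNReal) / (m.choose k) with hr
  have hr1 : r < 1 := by
    rw [hr, ENNReal.div_lt_iff (Or.inl hC0) (Or.inl hCtop), one_mul]
    exact_mod_cast hDC
  -- μ N = 0
  have hNE : ∀ t, N ⊆ {ω | U t ω ≠ Finset.univ} := fun t ω hω => hω t
  have hNbound : ∀ t, μ N ≤ (m : ENNReal) * r ^ t := by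
    intro t
    have h1 : μ N ≤ μ {ω | U t ω ≠ Finset.univ} := measure_mono (hNE t)
    rw [hU] at h1
    rw [measE m k μ Y hmeas hindep hdist t] at h1
    refine h1.trans ?_
    have h2 : ((B t : ENNReal)) ≤ ((m * (((m-1).choose k)^t) : ℕ) : ENNReal) :=
      Nat.cast_le.2 (badCount_le m k t)
    calc (B t : ENNReal) / (m.choose k : ENNReal)^t
        ≤ ((m * (((m-1).choose k)^t) : ℕ) : ENNReal) / (m.choose k : ENNReal)^t :=
          ENNReal.div_le_div_right h2 _
      _ = (m : ENNReal) * r ^ t := by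
          push_cast
          rw [hr, div_eq_mul_inv, mul_assoc, ENNReal.inv_pow, ← mul_pow, div_eq_mul_inv]
  have hN0 : μ N = 0 := by
    have htend : Filter.Tendsto (fun t => (m : ENNReal) * r ^ t) Filter.atTop (nhds 0) := by
      have h := ENNReal.Tendsto.const_mul (a := (m : ENNReal))
        (ENNReal.tendsto_pow_atTop_nhds_zero_of_lt_one hr1)
        (Or.inr (ENNReal.natCast_ne_top m))
      simpa using h
    exact le_antisymm (ge_of_tendsto' htend hNbound) zero_le
  -- tail event identification
  have hset : {ω | s < X ω} = {ω | U s ω ≠ Finset.univ} \ N := by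
    ext ω
    have hXω : X ω = sInf {t | U t ω = Finset.univ} := hX ω
    simp only [Set.mem_setOf_eq, Set.mem_diff, hXω, hN, Set.mem_setOf_eq]
    constructor
    · intro h
      have hTne : {t | U t ω = Finset.univ}.Nonempty := by
        by_contra hc
        rw [Set.not_nonempty_iff_eq_empty] at hc
        rw [hc, Nat.sInf_empty] at h
        omega
      refine ⟨fun hs => absurd (Nat.sInf_le hs) (not_le.2 h), ?_⟩
      push_neg
      exact hTne
    · rintro ⟨h1, h2⟩
      push_neg at h2
      obtain ⟨t0, ht0⟩ := h2
      have hmem := Nat.sInf_mem (⟨t0, ht0⟩ : {t | U t ω = Finset.univ}.Nonempty)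
      rw [Set.mem_setOf_eq] at hmem
      by_contra hc
      push_neg at hc
      apply h1
      have hsub : U (sInf {t | U t ω = Finset.univ}) ω ⊆ U s ω :=
        Finset.biUnion_subset_biUnion_of_subset_left _ (Finset.Icc_subset_Icc_right hc)
      rw [hmem] at hsub
      exact Finset.univ_subset_iff.1 hsub
  rw [hset, measure_diff_null hN0]
  rw [hU]
  rw [measE m k μ Y hmeas hindep hdist s]
  rw [ENNReal.toReal_div, ENNReal.toReal_pow, ENNReal.toReal_natCast, ENNReal.toReal_natCast]
  have hBR : ((B s : ℝ)) = ∑ i ∈ Finset.Icc 1 m,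
      (-1:ℝ)^(i+1) * (m.choose i) * (((m-i).choose k : ℝ))^s := by
    exact_mod_cast badCount m k s
  rw [hB] at hBR
  rw [hBR, Finset.sum_div]
  refine Finset.sum_congr rfl fun i _ => ?_
  rw [div_pow]
  ring
end

section
/- Let m and k be natural numbers with 1 ≤ k ≤ m. Let (Y_t)_{t≥1} be an i.i.d. sequence of random variables on a probability space, each uniformly distributed over the family of k-element subsets of {1, …, m}, and let X be the first time t such that the union Y_1 ∪ ⋯ ∪ Y_t equals {1, …, m}. Then the expectation of X equals Σ_{i=1}^{m} (−1)^{i+1} · C(m, i) / ( 1 − C(m−i, k) / C(m, k) ), where C(a, b) denotes the binomial coefficient. -/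
open MeasureTheory ProbabilityTheory

lemma inclExcl {Ω : Type} [MeasurableSpace Ω] (μ : Measure Ω) [IsProbabilityMeasure μ]
    {ι : Type} [Fintype ι] [DecidableEq ι] (B : ι → Set Ω) (hB : ∀ a, MeasurableSet (B a)) :
    (μ (⋃ a, B a)).toReal
      = 1 - ∑ S ∈ (Finset.univ : Finset ι).powerset,
          (-1 : ℝ) ^ S.card * (μ (⋂ a ∈ S, B a)).toReal := by
  classical
  have hInt : ∀ S : Finset ι, MeasurableSet (⋂ a ∈ S, B a) := fun S =>
    MeasurableSet.biInter (Set.to_countable _) (fun a _ => hB a)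
  have key : ∑ S ∈ (Finset.univ : Finset ι).powerset,
      (-1 : ℝ) ^ S.card * (μ (⋂ a ∈ S, B a)).toReal = (μ ((⋃ a, B a)ᶜ)).toReal := by
    have h1 : ∀ S : Finset ι, (μ (⋂ a ∈ S, B a)).toReal
        = ∫ ω, Set.indicator (⋂ a ∈ S, B a) (fun _ => (1:ℝ)) ω ∂μ := by
      intro S
      rw [integral_indicator_const (1:ℝ) (hInt S), smul_eq_mul, mul_one]
      rfl
    have h2 : (μ ((⋃ a, B a)ᶜ)).toReal
        = ∫ ω, Set.indicator ((⋃ a, B a)ᶜ) (fun _ => (1:ℝ)) ω ∂μ := by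
      rw [integral_indicator_const (1:ℝ) (MeasurableSet.compl (MeasurableSet.iUnion hB)),
        smul_eq_mul, mul_one]
      rfl
    simp only [h1, h2, ← integral_const_mul]
    rw [← integral_finset_sum]
    · congr 1
      ext ω
      have expand : ∀ a : ι, ((-Set.indicator (B a) (fun _ => (1:ℝ)) ω) + 1)
          = Set.indicator (B a)ᶜ (fun _ => (1:ℝ)) ω := by
        intro a
        by_cases h : ω ∈ B a <;> simp [Set.indicator_apply, h]
      calc ∑ S ∈ (Finset.univ : Finset ι).powerset,
            (-1 : ℝ) ^ S.card * Set.indicator (⋂ a ∈ S, B a) (fun _ => (1:ℝ)) ω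
          = ∑ S ∈ (Finset.univ : Finset ι).powerset,
            (∏ a ∈ S, (-Set.indicator (B a) (fun _ => (1:ℝ)) ω)) * ∏ a ∈ Finset.univ \ S, (1:ℝ) := by
            refine Finset.sum_congr rfl fun S _ => ?_
            rw [Finset.prod_const_one, mul_one]
            have : ∏ a ∈ S, (-Set.indicator (B a) (fun _ => (1:ℝ)) ω)
                = (-1:ℝ)^S.card * ∏ a ∈ S, Set.indicator (B a) (fun _ => (1:ℝ)) ω := by
              rw [← Finset.prod_const, ← Finset.prod_mul_distrib]
              exact Finset.prod_congr rfl fun a _ => by ring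
            rw [this]
            congr 1
            have : ∏ a ∈ S, Set.indicator (B a) (fun _ => (1:ℝ)) ω
                = if ∀ a ∈ S, ω ∈ B a then (1:ℝ) else 0 := by
              by_cases h : ∀ a ∈ S, ω ∈ B a
              · rw [if_pos h]
                exact Finset.prod_eq_one fun a ha => by simp [Set.indicator_apply, h a ha]
              · rw [if_neg h]
                push_neg at h
                obtain ⟨a, ha, hna⟩ := h
                exact Finset.prod_eq_zero ha (by simp [Set.indicator_apply, hna])
            rw [this, Set.indicator_apply]
            by_cases h : ∀ a ∈ S, ω ∈ B a <;> simp [Set.mem_iInter, h]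
        _ = ∏ a : ι, ((-Set.indicator (B a) (fun _ => (1:ℝ)) ω) + 1) :=
            (Finset.prod_add _ _ _).symm
        _ = ∏ a : ι, Set.indicator (B a)ᶜ (fun _ => (1:ℝ)) ω := by
            exact Finset.prod_congr rfl fun a _ => expand a
        _ = Set.indicator ((⋃ a, B a)ᶜ) (fun _ => (1:ℝ)) ω := by
            have : ∏ a : ι, Set.indicator (B a)ᶜ (fun _ => (1:ℝ)) ω
                = if ∀ a : ι, ω ∉ B a then (1:ℝ) else 0 := by
              by_cases h : ∀ a : ι, ω ∉ B a
              · rw [if_pos h]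
                exact Finset.prod_eq_one fun a _ => by simp [Set.indicator_apply, h a]
              · rw [if_neg h]
                push_neg at h
                obtain ⟨a, ha⟩ := h
                exact Finset.prod_eq_zero (Finset.mem_univ a) (by simp [Set.indicator_apply, ha])
            rw [this, Set.indicator_apply]
            by_cases h : ∀ a : ι, ω ∉ B a <;> simp [Set.mem_iUnion, h]
    · intro S _
      exact ((integrable_const (1:ℝ)).indicator (hInt S)).const_mul _
  rw [key, measure_compl (MeasurableSet.iUnion hB) (measure_ne_top μ _),
    ENNReal.toReal_sub_of_le (measure_mono (Set.subset_univ _)) (measure_ne_top μ _)]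
  simp

lemma meas_uncovered (m k : ℕ)
    {Ω : Type} [MeasurableSpace Ω] (μ : Measure Ω) [IsProbabilityMeasure μ]
    [MeasurableSpace (Finset (Fin m))] [MeasurableSingletonClass (Finset (Fin m))]
    (Y : ℕ → Ω → Finset (Fin m)) (hmeas : ∀ t, Measurable (Y t))
    (hindep : iIndepFun Y μ)
    (hdist : ∀ t, ∀ s : Finset (Fin m),
      μ {ω | Y t ω = s} = if s.card = k then (1 : ENNReal) / (m.choose k) else 0)
    (S : Finset (Fin m)) (n : ℕ) :
    μ (⋂ a ∈ S, ⋂ t ∈ Finset.Icc 1 n, {ω | a ∉ Y t ω})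
      = (((m - S.card).choose k : ENNReal) / (m.choose k)) ^ n := by
  classical
  set D : Set (Finset (Fin m)) := {s | ∀ a ∈ S, a ∉ s} with hD
  have hswap : (⋂ a ∈ S, ⋂ t ∈ Finset.Icc 1 n, {ω | a ∉ Y t ω})
      = ⋂ t ∈ Finset.Icc 1 n, Y t ⁻¹' D := by
    ext ω
    simp only [Set.mem_iInter, Set.mem_preimage, Set.mem_setOf_eq, hD]
    tauto
  rw [hswap]
  have hmeasD : MeasurableSet D := (Set.toFinite D).measurableSet
  have hprod : μ (⋂ t ∈ Finset.Icc 1 n, Y t ⁻¹' D)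
      = ∏ t ∈ Finset.Icc 1 n, μ (Y t ⁻¹' D) := by
    refine hindep.meas_biInter fun t _ => ⟨D, hmeasD, rfl⟩
  rw [hprod]
  have hsingle : ∀ t, μ (Y t ⁻¹' D)
      = ((m - S.card).choose k : ENNReal) / (m.choose k) := by
    intro t
    set D' : Finset (Finset (Fin m)) := Finset.univ.filter (fun s => ∀ a ∈ S, a ∉ s) with hD'
    have hU : Y t ⁻¹' D = ⋃ s ∈ D', Y t ⁻¹' {s} := by
      ext ω
      simp [hD', hD]
    rw [hU, measure_biUnion_finset]
    · have : ∀ s ∈ D', μ (Y t ⁻¹' {s})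
          = if s.card = k then (1 : ENNReal) / (m.choose k) else 0 := by
        intro s _
        have : Y t ⁻¹' {s} = {ω | Y t ω = s} := by ext ω; simp
        rw [this, hdist t s]
      rw [Finset.sum_congr rfl this, ← Finset.sum_filter]
      have hcard : (D'.filter (fun s => s.card = k)) = Finset.powersetCard k Sᶜ := by
        ext s
        simp only [Finset.mem_filter, Finset.mem_powersetCard, hD', Finset.mem_univ, true_and]
        constructor
        · rintro ⟨h1, h2⟩
          exact ⟨fun a ha => Finset.mem_compl.2 fun hc => h1 a hc ha, h2⟩
        · rintro ⟨h1, h2⟩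
          exact ⟨fun a haS has => Finset.mem_compl.1 (h1 has) haS, h2⟩
      rw [hcard, Finset.sum_const, Finset.card_powersetCard, Finset.card_compl,
        Fintype.card_fin]
      rw [nsmul_eq_mul, mul_one_div]
    · intro s hs s' hs' hss
      exact Set.disjoint_left.2 fun ω h1 h2 => hss (by
        have e1 : Y t ω = s := h1
        have e2 : Y t ω = s' := h2
        rw [← e1, e2])
    · exact fun s _ => hmeas t (measurableSet_singleton s)
  rw [Finset.prod_congr rfl (fun t _ => hsingle t), Finset.prod_const, Nat.card_Icc]
  norm_num

lemma biUnion_measurable {Ω : Type} [MeasurableSpace Ω] {β : Type} [Fintype β] [DecidableEq β]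
    [MeasurableSpace (Finset β)] [MeasurableSingletonClass (Finset β)]
    (Y : ℕ → Ω → Finset β) (hmeas : ∀ t, Measurable (Y t)) (s : Finset ℕ) :
    Measurable (fun ω => s.biUnion (fun i => Y i ω)) := by
  classical
  induction s using Finset.induction_on with
  | empty => simpa using measurable_const
  | insert a s' hnotmem ih =>
    have : (fun ω => (insert a s').biUnion (fun i => Y i ω))
        = fun ω => Y a ω ∪ s'.biUnion (fun i => Y i ω) := by
      ext ω : 1
      exact Finset.biUnion_insert ..
    rw [this]
    exact (measurable_of_countable
      (fun p : Finset β × Finset β => p.1 ∪ p.2)).comp ((hmeas a).prodMk ih)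

lemma lintegral_nat_eq_tsum {Ω : Type} [MeasurableSpace Ω] (μ : Measure Ω)
    (X : Ω → ℕ) (hX : Measurable X) :
    ∫⁻ ω, (X ω : ENNReal) ∂μ = ∑' n : ℕ, μ {ω | n < X ω} := by
  have hset : ∀ n : ℕ, MeasurableSet {ω | n < X ω} := fun n => hX measurableSet_Ioi
  have hpt : ∀ ω, (X ω : ENNReal)
      = ∑' n : ℕ, Set.indicator {ω' | n < X ω'} (fun _ => (1 : ENNReal)) ω := by
    intro ω
    rw [tsum_eq_sum (s := Finset.range (X ω)) (fun n hn => by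
      simp only [Finset.mem_range, not_lt] at hn
      simp [Set.indicator_apply, not_lt.2 hn])]
    trans (∑ n ∈ Finset.range (X ω), (1 : ENNReal))
    · simp
    · refine (Finset.sum_congr rfl fun n hn => ?_).symm
      simp only [Finset.mem_range] at hn
      simp [Set.indicator_apply, hn]
  calc ∫⁻ ω, (X ω : ENNReal) ∂μ
      = ∫⁻ ω, ∑' n : ℕ, Set.indicator {ω' | n < X ω'} (fun _ => (1 : ENNReal)) ω ∂μ := by
        exact lintegral_congr hpt
    _ = ∑' n : ℕ, ∫⁻ ω, Set.indicator {ω' | n < X ω'} (fun _ => (1 : ENNReal)) ω ∂μ := by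
        exact lintegral_tsum fun n => (measurable_const.indicator (hset n)).aemeasurable
    _ = ∑' n : ℕ, μ {ω | n < X ω} := by
        refine tsum_congr fun n => ?_
        rw [lintegral_indicator_const (hset n), one_mul]

/-- The `k`-coupon collector's problem, expectation: with `1 ≤ k ≤ m`, draw i.i.d.
uniformly random `k`-element subsets `Y_1, Y_2, …` of `{1, …, m}`, and let `X` be the first
time `t` with `Y_1 ∪ ⋯ ∪ Y_t = {1, …, m}`.  Then
`E[X] = ∑_{i=1}^m (-1)^{i+1} C(m,i) / (1 - C(m-i,k)/C(m,k))`. -/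
theorem kCouponCollector_expectation (m k : ℕ) (hk : 1 ≤ k) (hkm : k ≤ m)
    {Ω : Type} [MeasurableSpace Ω] (μ : Measure Ω) [IsProbabilityMeasure μ]
    [MeasurableSpace (Finset (Fin m))] [MeasurableSingletonClass (Finset (Fin m))]
    (Y : ℕ → Ω → Finset (Fin m))
    (hmeas : ∀ t, Measurable (Y t))
    (hindep : iIndepFun Y μ)
    (hdist : ∀ t, ∀ s : Finset (Fin m),
      μ {ω | Y t ω = s} = if s.card = k then (1 : ENNReal) / (m.choose k) else 0)
    (X : Ω → ℕ)
    (hX : ∀ ω, X ω =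
      sInf {t | (Finset.Icc 1 t).biUnion (fun i => Y i ω) = Finset.univ}) :
    (∫ ω, (X ω : ℝ) ∂μ)
      = ∑ i ∈ Finset.Icc 1 m,
          (-1 : ℝ) ^ (i + 1) * (m.choose i) /
            (1 - ((m - i).choose k : ℝ) / (m.choose k)) := by
  classical
  have hm : 1 ≤ m := hk.trans hkm
  have hN : 0 < m.choose k := Nat.choose_pos hkm
  set q : ℕ → ℝ := fun i => ((m - i).choose k : ℝ) / (m.choose k) with hq
  -- basic bounds on q
  have hqnn : ∀ i, 0 ≤ q i := fun i => div_nonneg (Nat.cast_nonneg _) (Nat.cast_nonneg _)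
  have hchoose_lt : ∀ i, 1 ≤ i → (m - i).choose k < m.choose k := by
    intro i hi
    have h1 : (m - i).choose k ≤ (m - 1).choose k :=
      Nat.choose_le_choose k (by omega)
    refine lt_of_le_of_lt h1 ?_
    obtain ⟨m', rfl⟩ : ∃ m', m = m' + 1 := ⟨m - 1, by omega⟩
    obtain ⟨k', rfl⟩ : ∃ k', k = k' + 1 := ⟨k - 1, by omega⟩
    have e1 : m' + 1 - 1 = m' := rfl
    rw [e1, Nat.choose_succ_succ']
    have hpos : 0 < m'.choose k' := Nat.choose_pos (by omega)
    omega
  have hqlt : ∀ i, 1 ≤ i → q i < 1 := by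
    intro i hi
    rw [hq, div_lt_one (by exact_mod_cast hN)]
    exact_mod_cast hchoose_lt i hi
  -- the covering events
  set Cov : ℕ → Set Ω :=
    fun n => {ω | (Finset.Icc 1 n).biUnion (fun i => Y i ω) = Finset.univ} with hCov
  have hCovMeas : ∀ n, MeasurableSet (Cov n) := by
    intro n
    exact (biUnion_measurable Y hmeas (Finset.Icc 1 n)) (measurableSet_singleton _)
  have hCovMono : ∀ a b, a ≤ b → Cov a ⊆ Cov b := by
    intro a b hab ω hω
    have hsub : (Finset.Icc 1 a).biUnion (fun i => Y i ω)
        ⊆ (Finset.Icc 1 b).biUnion (fun i => Y i ω) :=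
      Finset.biUnion_subset_biUnion_of_subset_left _ (Finset.Icc_subset_Icc le_rfl hab)
    exact Finset.univ_subset_iff.1 (hω ▸ hsub)
  -- uncovered-element events
  set B : Fin m → ℕ → Set Ω :=
    fun a n => ⋂ t ∈ Finset.Icc 1 n, {ω | a ∉ Y t ω} with hB
  have hBMeas : ∀ a n, MeasurableSet (B a n) := by
    intro a n
    refine MeasurableSet.biInter (Set.to_countable _) fun t _ => ?_
    exact hmeas t ((Set.toFinite {s : Finset (Fin m) | a ∉ s}).measurableSet)
  have hCovCompl : ∀ n, (Cov n)ᶜ = ⋃ a, B a n := by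
    intro n
    ext ω
    simp only [hCov, hB, Set.mem_compl_iff, Set.mem_setOf_eq, Set.mem_iUnion,
      Set.mem_iInter, ← Finset.eq_univ_iff_forall]
    rw [show ¬ ((Finset.Icc 1 n).biUnion (fun i => Y i ω) = Finset.univ)
        ↔ ∃ a, a ∉ (Finset.Icc 1 n).biUnion (fun i => Y i ω) by
      rw [not_iff_comm]; push_neg; exact (Finset.eq_univ_iff_forall).symm]
    refine exists_congr fun a => ?_
    simp [Finset.mem_biUnion]
  -- measure of intersections
  have hInterMeas : ∀ (S : Finset (Fin m)) (n : ℕ),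
      μ (⋂ a ∈ S, B a n) = (((m - S.card).choose k : ENNReal) / (m.choose k)) ^ n := by
    intro S n
    exact meas_uncovered m k μ Y hmeas hindep hdist S n
  have hInterReal : ∀ (S : Finset (Fin m)) (n : ℕ),
      (μ (⋂ a ∈ S, B a n)).toReal = (q S.card) ^ n := by
    intro S n
    rw [hInterMeas S n, ENNReal.toReal_pow]
    congr 1
    rw [ENNReal.toReal_div]
    simp [hq]
  -- inclusion-exclusion formula for the complement of covering
  have hF : ∀ n, (μ (Cov n)ᶜ).toReal
      = ∑ i ∈ Finset.Icc 1 m, ((-1 : ℝ) ^ (i + 1) * (m.choose i)) * (q i) ^ n := by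
    intro n
    rw [hCovCompl n, inclExcl μ (fun a => B a n) (fun a => hBMeas a n)]
    have step1 : ∑ S ∈ (Finset.univ : Finset (Fin m)).powerset,
        (-1 : ℝ) ^ S.card * (μ (⋂ a ∈ S, B a n)).toReal
        = ∑ S ∈ (Finset.univ : Finset (Fin m)).powerset,
          ((-1 : ℝ) ^ S.card * (q S.card) ^ n) := by
      exact Finset.sum_congr rfl fun S _ => by rw [hInterReal S n]
    rw [step1]
    rw [Finset.sum_powerset_apply_card (fun i => (-1 : ℝ) ^ i * (q i) ^ n)]
    rw [Finset.card_univ, Fintype.card_fin]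
    rw [Finset.sum_range_succ']
    have h0 : (m.choose 0) • ((-1 : ℝ) ^ 0 * (q 0) ^ n) = 1 := by
      have : q 0 = 1 := by
        simp only [hq, Nat.sub_zero]
        rw [div_self (by exact_mod_cast hN.ne')]
      simp [this]
    rw [h0]
    have hre : ∑ i ∈ Finset.Icc 1 m, ((-1 : ℝ) ^ (i + 1) * (m.choose i)) * (q i) ^ n
        = ∑ i ∈ Finset.range m, ((-1 : ℝ) ^ ((1 + i) + 1) * (m.choose (1 + i))) * (q (1 + i)) ^ n := by
      rw [← Finset.Ico_add_one_right_eq_Icc, Finset.sum_Ico_eq_sum_range]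
      rfl
    rw [hre]
    have key : ∀ S T : ℝ, S + T = 0 → 1 - (S + 1) = T := by intros; linarith
    apply key
    rw [← Finset.sum_add_distrib]
    refine Finset.sum_eq_zero fun i _ => ?_
    rw [nsmul_eq_mul, Nat.add_comm 1 i]
    ring
  -- the event of eventually covering
  set A : Set Ω := ⋃ t, Cov t with hA
  have hAmeas : MeasurableSet A := MeasurableSet.iUnion hCovMeas
  have hXgt : ∀ n, {ω | n < X ω} = (Cov n)ᶜ ∩ A := by
    intro n
    ext ω
    have hXω : X ω = sInf {t | ω ∈ Cov t} := hX ω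
    simp only [Set.mem_setOf_eq, Set.mem_inter_iff, Set.mem_compl_iff, hA, Set.mem_iUnion]
    constructor
    · intro h
      have hne : {t | ω ∈ Cov t}.Nonempty := by
        by_contra hc
        rw [Set.not_nonempty_iff_eq_empty] at hc
        rw [hXω, hc, Nat.sInf_empty] at h
        omega
      refine ⟨fun hcov => ?_, ⟨sInf {t | ω ∈ Cov t}, Nat.sInf_mem hne⟩⟩
      have h2 : X ω ≤ n := by rw [hXω]; exact Nat.sInf_le hcov
      omega
    · rintro ⟨hnc, t, ht⟩
      have hne : {t | ω ∈ Cov t}.Nonempty := ⟨t, ht⟩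
      have hmem : ω ∈ Cov (X ω) := by rw [hXω]; exact Nat.sInf_mem hne
      by_contra hc
      push_neg at hc
      exact hnc (hCovMono _ _ hc hmem)
  have hXgtMeas : ∀ n, MeasurableSet {ω | n < X ω} := fun n =>
    (hXgt n) ▸ ((hCovMeas n).compl.inter hAmeas)
  have hXm : Measurable X := by
    refine measurable_to_countable' fun t => ?_
    match t with
    | 0 =>
      have : X ⁻¹' {0} = {ω | 0 < X ω}ᶜ := by
        ext ω; simp only [Set.mem_preimage, Set.mem_singleton_iff, Set.mem_compl_iff,
          Set.mem_setOf_eq]; omega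
      rw [this]; exact (hXgtMeas 0).compl
    | (t+1) =>
      have : X ⁻¹' {t+1} = {ω | t < X ω} ∩ {ω | t+1 < X ω}ᶜ := by
        ext ω; simp only [Set.mem_preimage, Set.mem_singleton_iff, Set.mem_inter_iff,
          Set.mem_compl_iff, Set.mem_setOf_eq]; omega
      rw [this]; exact (hXgtMeas t).inter (hXgtMeas (t+1)).compl
  -- the never-covered event is null
  have hBsingle : ∀ (a : Fin m) (n : ℕ), (μ (B a n)).toReal = (q 1) ^ n := by
    intro a n
    have hset : B a n = ⋂ a' ∈ ({a} : Finset (Fin m)), B a' n := by simp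
    have := hInterReal ({a} : Finset (Fin m)) n
    rw [Finset.card_singleton] at this
    rw [hset, this]
  have hFle : ∀ n, (μ (Cov n)ᶜ).toReal ≤ (m : ℝ) * (q 1) ^ n := by
    intro n
    have h1 : μ (Cov n)ᶜ ≤ ∑ a : Fin m, μ (B a n) := by
      rw [hCovCompl n]
      exact measure_iUnion_fintype_le _ _
    have h2 : (μ (Cov n)ᶜ).toReal ≤ (∑ a : Fin m, μ (B a n)).toReal :=
      ENNReal.toReal_mono (ENNReal.sum_ne_top.2 fun a _ => measure_ne_top μ _) h1
    refine h2.trans_eq ?_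
    rw [ENNReal.toReal_sum (fun a _ => measure_ne_top μ _)]
    rw [Finset.sum_congr rfl (fun a _ => hBsingle a n)]
    simp [Finset.card_univ]
  have hAc : μ Aᶜ = 0 := by
    have hle : ∀ n, (μ Aᶜ).toReal ≤ (m : ℝ) * (q 1) ^ n := by
      intro n
      refine le_trans ?_ (hFle n)
      exact ENNReal.toReal_mono (measure_ne_top μ _)
        (measure_mono (Set.compl_subset_compl.2 (Set.subset_iUnion Cov n)))
    have htend : Filter.Tendsto (fun n : ℕ => (m : ℝ) * (q 1) ^ n) Filter.atTop (nhds 0) := by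
      have := (tendsto_pow_atTop_nhds_zero_of_lt_one (hqnn 1) (hqlt 1 le_rfl)).const_mul (m : ℝ)
      simpa using this
    have h0 : (μ Aᶜ).toReal ≤ 0 := ge_of_tendsto' htend hle
    have h1 : (μ Aᶜ).toReal = 0 := le_antisymm h0 ENNReal.toReal_nonneg
    rw [ENNReal.toReal_eq_zero_iff] at h1
    exact h1.resolve_right (measure_ne_top μ _)
  -- integral as a sum of tail probabilities
  have hint : ∫ ω, (X ω : ℝ) ∂μ = ∑' n : ℕ, (μ (Cov n)ᶜ).toReal := by
    have hmr : Measurable fun ω => ((X ω : ℕ) : ℝ) :=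
      (measurable_of_countable (fun n : ℕ => (n : ℝ))).comp hXm
    rw [integral_eq_lintegral_of_nonneg_ae
      (Filter.Eventually.of_forall fun ω => Nat.cast_nonneg (X ω))
      hmr.aestronglyMeasurable]
    rw [show (fun ω => ENNReal.ofReal ((X ω : ℝ))) = fun ω => ((X ω : ℕ) : ENNReal) from
      funext fun ω => ENNReal.ofReal_natCast _]
    rw [lintegral_nat_eq_tsum μ X hXm]
    rw [show (fun n : ℕ => μ {ω | n < X ω}) = fun n : ℕ => μ (Cov n)ᶜ from
      funext fun n => by rw [hXgt n, measure_inter_conull hAc]]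
    exact ENNReal.tsum_toReal_eq fun n => measure_ne_top μ _
  rw [hint]
  rw [tsum_congr hF]
  have hsummable : ∀ i ∈ Finset.Icc 1 m,
      Summable (fun n : ℕ => ((-1 : ℝ) ^ (i + 1) * (m.choose i)) * (q i) ^ n) := by
    intro i hi
    rw [Finset.mem_Icc] at hi
    exact (summable_geometric_of_lt_one (hqnn i) (hqlt i hi.1)).mul_left _
  rw [Summable.tsum_finsetSum hsummable]
  refine Finset.sum_congr rfl fun i hi => ?_
  rw [Finset.mem_Icc] at hi
  rw [tsum_mul_left, tsum_geometric_of_lt_one (hqnn i) (hqlt i hi.1)]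
  rw [div_eq_mul_inv]
end
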